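/- For a finite undirected graph G with self-loops but no multiple edges, the spectrum of L(G) is contained in σ(L(Ĝ)) ∩ [0, 2·d(G°) + 1], where Ĝ is the lifted graph of G. -/

import Mathlib

/-- The Laplacian of a graph with self-loops: the Laplacian of the self-loop-free
part `G°` plus `e_i e_iᵀ` for each self-loop `(i,i)`, encoded as loop set `s`. -/
def loopLaplacian {N : ℕ} (G : SimpleGraph (Fin N)) [DecidableRel G.Adj]
    (s : Finset (Fin N)) : Matrix (Fin N) (Fin N) ℝ :=
  G.lapMatrix ℝ + Matrix.diagonal (fun i => if i ∈ s then 1 else 0)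

/-- The lifted graph of a graph with self-loops `(G, s)` on `N` vertices: a simple
graph on `2N + 1` vertices (two copies of the vertex set plus a middle vertex).
Each non-loop edge `(i,j)` yields edges `(i,j)` and `(i+N+1, j+N+1)`; each
self-loop `(i,i)` yields edges `(i, N+1)` and `(N+1, i+N+1)`, where `N+1` denotes
the middle vertex. -/
def liftedGraph {N : ℕ} (G : SimpleGraph (Fin N)) (s : Finset (Fin N)) :
    SimpleGraph (Fin N ⊕ Unit ⊕ Fin N) where
  Adj a b :=
    match a, b with
    | Sum.inl i, Sum.inl j => G.Adj i j
    | Sum.inl i, Sum.inr (Sum.inl _) => i ∈ s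
    | Sum.inr (Sum.inl _), Sum.inl i => i ∈ s
    | Sum.inr (Sum.inl _), Sum.inr (Sum.inr i) => i ∈ s
    | Sum.inr (Sum.inr i), Sum.inr (Sum.inl _) => i ∈ s
    | Sum.inr (Sum.inr i), Sum.inr (Sum.inr j) => G.Adj i j
    | _, _ => False
  symm := by
    constructor
    rintro (i | u | i) (j | v | j) h <;>
      first | exact h.symm | exact h | cases h
  loopless := by
    constructor
    rintro (i | u | i) h <;> first | exact G.irrefl h | cases h

noncomputable instance {N : ℕ} (G : SimpleGraph (Fin N)) (s : Finset (Fin N)) :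
    DecidableRel (liftedGraph G s).Adj := Classical.decRel _

/-- The Laplacian of the lifted graph (an ordinary loopless graph Laplacian). -/
noncomputable def liftedLaplacian {N : ℕ} (G : SimpleGraph (Fin N))
    (s : Finset (Fin N)) : Matrix (Fin N ⊕ Unit ⊕ Fin N) (Fin N ⊕ Unit ⊕ Fin N) ℝ :=
  (liftedGraph G s).lapMatrix ℝ

/-!
An eigenvector `v` of `L(G)` lifts to the eigenvector `(v, 0, -v)` of `L(Ĝ)`: on each copy the
edge to the middle vertex reproduces the loop term of `L(G)`, and at the middle vertex the
contributions of the two copies cancel. The bound is Gershgorin's theorem: row `k` of `L(G)` has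
diagonal entry `deg k + [k ∈ s]` and off-diagonal absolute row sum `deg k`.
-/

open Finset Matrix

theorem SimpleGraph.lapMatrix_mulVec_apply_eq_sum {V R : Type*} [Fintype V] [DecidableEq V]
    [NonAssocRing R] (H : SimpleGraph V) [DecidableRel H.Adj] (f : V → R) (x : V) :
    (H.lapMatrix R *ᵥ f) x = ∑ y, if H.Adj x y then f x - f y else 0 := by
  rw [H.lapMatrix_mulVec_apply, ← Finset.sum_filter, ← H.neighborFinset_eq_filter,
    Finset.sum_sub_distrib, Finset.sum_const, H.card_neighborFinset_eq_degree, nsmul_eq_mul]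

section Lift

variable {N : ℕ} (G : SimpleGraph (Fin N)) [DecidableRel G.Adj] (s : Finset (Fin N))

theorem loopLaplacian_mulVec_apply (v : Fin N → ℝ) (i : Fin N) :
    (loopLaplacian G s *ᵥ v) i = (G.lapMatrix ℝ *ᵥ v) i + if i ∈ s then v i else 0 := by
  simp [loopLaplacian, add_mulVec, mulVec_diagonal]

def liftVec (v : Fin N → ℝ) : Fin N ⊕ Unit ⊕ Fin N → ℝ :=
  Sum.elim v (Sum.elim 0 (-v))

theorem liftVec_smul (c : ℝ) (v : Fin N → ℝ) : liftVec (c • v) = c • liftVec v := by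
  ext (i | u | i) <;> simp [liftVec]

theorem liftVec_ne_zero {v : Fin N → ℝ} (hv : v ≠ 0) : liftVec v ≠ 0 := by
  contrapose! hv
  ext i
  exact congrFun hv (Sum.inl i)

theorem liftedLaplacian_mulVec_liftVec (v : Fin N → ℝ) :
    liftedLaplacian G s *ᵥ liftVec v = liftVec (loopLaplacian G s *ᵥ v) := by
  ext (i | u | i) <;>
    simp only [liftedLaplacian, SimpleGraph.lapMatrix_mulVec_apply_eq_sum, liftVec, Pi.neg_apply,
      loopLaplacian_mulVec_apply, Fintype.sum_sum_type, Sum.elim_inl, Sum.elim_inr, Pi.zero_apply,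
      univ_unique, sum_singleton]
  -- `liftedGraph` carries the classical decidability instance, hence the case splits on `G.Adj`.
  · simp only [liftedGraph, PUnit.default_eq_unit, sub_zero, ↓reduceIte, sum_const_zero, add_zero,
      add_left_inj]
    exact sum_congr rfl fun j _ => by by_cases h : G.Adj i j <;> simp [h]
  · simp [liftedGraph]
  · simp only [liftedGraph, ↓reduceIte, sum_const_zero, PUnit.default_eq_unit, sub_zero, zero_add]
    rw [neg_add, ← sum_neg_distrib, add_comm]
    congr 1
    · exact sum_congr rfl fun j _ => by by_cases h : G.Adj i j <;> simp [h, neg_add_eq_sub]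
    · split_ifs <;> simp

theorem loopLaplacian_apply_self (k : Fin N) :
    loopLaplacian G s k k = G.degree k + if k ∈ s then 1 else 0 := by
  simp [loopLaplacian, SimpleGraph.lapMatrix, SimpleGraph.degMatrix]

theorem loopLaplacian_apply_of_ne {j k : Fin N} (h : j ≠ k) :
    loopLaplacian G s k j = -G.adjMatrix ℝ k j := by
  simp [loopLaplacian, SimpleGraph.lapMatrix, SimpleGraph.degMatrix, h.symm]

theorem sum_erase_norm_loopLaplacian (k : Fin N) :
    ∑ j ∈ univ.erase k, ‖loopLaplacian G s k j‖ = G.degree k := by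
  have hoff : ∀ j ∈ univ.erase k, ‖loopLaplacian G s k j‖ = G.adjMatrix ℝ k j := fun j hj => by
    rw [loopLaplacian_apply_of_ne G s (ne_of_mem_erase hj), norm_neg]
    by_cases h : G.Adj k j <;> simp [h]
  rw [sum_congr rfl hoff, sum_erase _ (by simp)]
  simpa [mulVec, dotProduct] using G.adjMatrix_mulVec_const_apply (α := ℝ) (a := 1) (v := k)

theorem loopLaplacian_eigenvalue_mem_Icc {μ : ℝ}
    (hμ : Module.End.HasEigenvalue (toLin' (loopLaplacian G s)) μ) :
    μ ∈ Set.Icc (0 : ℝ) (2 * G.maxDegree + 1) := by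
  obtain ⟨k, hk⟩ := eigenvalue_mem_ball hμ
  rw [Metric.mem_closedBall, Real.dist_eq, sum_erase_norm_loopLaplacian,
    loopLaplacian_apply_self] at hk
  have hdeg : (G.degree k : ℝ) ≤ G.maxDegree := by exact_mod_cast G.degree_le_maxDegree k
  have hloop : (0 : ℝ) ≤ (if k ∈ s then 1 else 0) ∧ (if k ∈ s then 1 else 0 : ℝ) ≤ 1 := by
    split_ifs <;> norm_num
  constructor <;> linarith [abs_le.mp hk]

end Lift

/-- Spectrum inclusion: for a finite undirected graph `G` with self-loops but no
multiple edges, every eigenvalue of `L(G)` is an eigenvalue of the Laplacian of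
the lifted graph `Ĝ` and lies in `[0, 2·d(G°) + 1]`. -/
theorem loopLaplacian_spectrum_subset
    {N : ℕ} (G : SimpleGraph (Fin N)) [DecidableRel G.Adj]
    (s : Finset (Fin N))
    (μ : ℝ) (v : Fin N → ℝ) (hv : v ≠ 0)
    (heig : (loopLaplacian G s).mulVec v = μ • v) :
    (∃ w : Fin N ⊕ Unit ⊕ Fin N → ℝ, w ≠ 0 ∧
        (liftedLaplacian G s).mulVec w = μ • w) ∧
      μ ∈ Set.Icc (0 : ℝ) (2 * G.maxDegree + 1) := by
  have hμ : Module.End.HasEigenvalue (toLin' (loopLaplacian G s)) μ :=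
    Module.End.hasEigenvalue_of_hasEigenvector
      ⟨Module.End.mem_eigenspace_iff.mpr (by rw [toLin'_apply, heig]), hv⟩
  refine ⟨⟨liftVec v, liftVec_ne_zero hv, ?_⟩, loopLaplacian_eigenvalue_mem_Icc G s hμ⟩
  rw [liftedLaplacian_mulVec_liftVec, heig, liftVec_smul]
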